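/- Assume in addition that V_1^n = Ṽ_1^{n+1} = 1/‖ 1 ‖ and V_{1+s}^n = Ṽ_{1+s}^{n+1} = v_s/‖ v_s ‖ for all s ∈ {1,…,d} (so r ≥ d+1). Define the updated momentum density componentwise by j_s^{n+1} = ‖ v_s ‖ · Σ_k X̃_k^{n+1} S̃^{n+1}_{k,1+s}. Then the discrete momentum continuity equation (j^{n+1} − j^n)/τ + ∇_x · σ^n + E^n ρ^n = 0 holds pointwise on Ω_x (componentwise: (j_s^{n+1} − j_s^n)/τ + Σ_t ∂_{x_t} σ^n_{ts} + E_s^n ρ^n = 0 for each s). -/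

import Mathlib

/-!
Because `V_{1+s} = Ṽ_{1+s}^{n+1} = v_s/‖v_s‖`, column `1+s` of `S̃^{n+1}` holds the coefficients
of `K^{n+1}_{1+s}` in the orthonormal family `X̃^{n+1}`, and `K^{n+1}_{1+s}` lies in its span;
hence `j_s^{n+1} = ‖v_s‖ K^{n+1}_{1+s}`, while `j_s^n = ‖v_s‖ K^n_{1+s}` by orthonormality of the
`V_j`. So `(j_s^{n+1} - j_s^n)/τ = ∫ v_s RHS[f^n] dv`. Since `f^n` is a finite sum of products,
`x`-derivatives and `v`-integrals commute term by term, so the transport part of this moment is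
`-∇_x · σ^n`, and a Gaussian integration by parts in `v` turns the field part into `-E_s ρ^n`.
-/

open MeasureTheory Real Set

noncomputable section

/-- Partial derivative of `u` in the `i`-th coordinate direction. -/
def pd {d : ℕ} (i : Fin d) (u : (Fin d → ℝ) → ℝ) (x : Fin d → ℝ) : ℝ :=
  fderiv ℝ u x (Pi.single i 1)

/-- Gaussian weight `f_{0v}(v) = exp(-|v|²/2)`. -/
def f0v {d : ℕ} (v : Fin d → ℝ) : ℝ := Real.exp (-(∑ i, v i ^ 2) / 2)

/-- Fundamental domain of the `d`-dimensional torus `Ω_x`. -/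
def cube (d : ℕ) : Set (Fin d → ℝ) := Set.univ.pi fun _ => Set.Ioc (0 : ℝ) 1

/-- `L²(Ω_x)` inner product. -/
def ipx {d : ℕ} (u w : (Fin d → ℝ) → ℝ) : ℝ := ∫ x in cube d, u x * w x

/-- Weighted inner product `⟨u,w⟩_v = ∫ f_{0v} u w dv`. -/
def ipv {d : ℕ} (u w : (Fin d → ℝ) → ℝ) : ℝ := ∫ v, f0v v * u v * w v

/-- Weighted norm `‖w‖ = ⟨w,w⟩_v^{1/2}`. -/
def nv {d : ℕ} (w : (Fin d → ℝ) → ℝ) : ℝ := Real.sqrt (ipv w w)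

/-- Periodicity with period 1 in each coordinate (functions on the torus). -/
def Per {d : ℕ} (u : (Fin d → ℝ) → ℝ) : Prop := ∀ x i, u (x + Pi.single i 1) = u x

/-- All (iterated) derivatives have at most polynomial growth. -/
def PolyAll {d : ℕ} (g : (Fin d → ℝ) → ℝ) : Prop :=
  ∀ n : ℕ, ∃ (C : ℝ) (p : ℕ), ∀ v, ‖iteratedFDeriv ℝ n g v‖ ≤ C * (1 + ‖v‖) ^ p

open Function (HasTemperateGrowth)

section Gaussian

variable {d : ℕ}

lemma pd_f0v (t : Fin d) (v : Fin d → ℝ) : pd t f0v v = -(v t) * f0v v := by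
  have hq : HasFDerivAt (fun w : Fin d → ℝ => ∑ i, w i ^ 2)
      (∑ i, (2 * v i) • ContinuousLinearMap.proj (R := ℝ) (φ := fun _ : Fin d => ℝ) i) v :=
    HasFDerivAt.fun_sum fun i _ => by
      simpa using HasFDerivAt.pow (f := fun w : Fin d → ℝ => w i) (hasFDerivAt_apply i v) 2
  have hf : f0v = fun w : Fin d → ℝ => Real.exp (-1 / 2 * ∑ i, w i ^ 2) := by
    funext w; rw [f0v]; ring_nf
  rw [pd, hf, (hq.const_mul (-1 / 2 : ℝ)).exp.fderiv]
  simp only [smul_apply, sum_apply, ContinuousLinearMap.proj_apply, Pi.single_apply, smul_eq_mul,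
    mul_ite, mul_one, mul_zero, Finset.sum_ite_eq', Finset.mem_univ, ↓reduceIte, neg_mul]
  ring

lemma differentiable_f0v : Differentiable ℝ (f0v (d := d)) := by
  unfold f0v; fun_prop

lemma pd_f0v_mul {h : (Fin d → ℝ) → ℝ} (hh : Differentiable ℝ h) (t : Fin d) (v : Fin d → ℝ) :
    pd t (fun w => f0v w * h w) v = f0v v * (pd t h v - v t * h v) := by
  have h0 := pd_f0v t v
  unfold pd at *
  rw [fderiv_fun_mul (differentiable_f0v v) (hh v)]
  simp only [add_apply, smul_apply, smul_eq_mul, h0, neg_mul, mul_neg]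
  ring

lemma integrable_one_add_abs_pow_mul_exp_neg_sq (p : ℕ) :
    Integrable fun x : ℝ => (1 + |x|) ^ p * Real.exp (-x ^ 2 / 2) := by
  have hpow (k : ℕ) : Integrable fun x : ℝ => |x| ^ k * Real.exp (-x ^ 2 / 2) := by
    refine (integrable_rpow_mul_exp_neg_mul_sq (b := 1 / 2) (by norm_num)
      (s := k) (by linarith [(k.cast_nonneg : (0 : ℝ) ≤ k)])).norm.congr (ae_of_all _ fun x => ?_)
    dsimp only
    rw [Real.rpow_natCast, norm_mul, norm_pow, Real.norm_eq_abs, Real.norm_eq_abs, Real.abs_exp]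
    ring_nf
  simp_rw [add_pow, one_pow, one_mul, Finset.sum_mul]
  exact integrable_finsetSum _ fun k _ => by
    simpa only [mul_assoc, mul_comm, mul_left_comm] using (hpow (p - k)).const_mul (p.choose k : ℝ)

lemma one_add_norm_le_prod (v : Fin d → ℝ) : 1 + ‖v‖ ≤ ∏ i, (1 + |v i|) := by
  have hle (i : Fin d) : 1 + |v i| ≤ ∏ j, (1 + |v j|) := by
    rw [← Finset.mul_prod_erase _ _ (Finset.mem_univ i)]
    exact le_mul_of_one_le_right (by positivity)
      (Finset.one_le_prod fun j _ => by simp)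
  have hprod : 1 ≤ ∏ j, (1 + |v j|) := Finset.one_le_prod fun j _ => by simp
  have hnorm : ‖v‖ ≤ ∏ j, (1 + |v j|) - 1 :=
    (pi_norm_le_iff_of_nonneg (by linarith)).2 fun i => by
      rw [Real.norm_eq_abs]; linarith [hle i]
  linarith

lemma f0v_eq_prod (v : Fin d → ℝ) : f0v v = ∏ i, Real.exp (-v i ^ 2 / 2) := by
  rw [f0v, ← Real.exp_sum, ← Finset.sum_div, Finset.sum_neg_distrib]

lemma integrable_f0v_mul {g : (Fin d → ℝ) → ℝ} (hg : g.HasTemperateGrowth) :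
    Integrable fun v => f0v v * g v := by
  obtain ⟨p, C, hC⟩ := hg.2 0
  simp only [norm_iteratedFDeriv_zero, Real.norm_eq_abs] at hC
  have hC0 : 0 ≤ C := by simpa using (abs_nonneg _).trans (hC 0)
  have hdom : Integrable fun v : Fin d → ℝ =>
      C * ∏ i, ((1 + |v i|) ^ p * Real.exp (-v i ^ 2 / 2)) :=
    (Integrable.fintype_prod fun _ => integrable_one_add_abs_pow_mul_exp_neg_sq p).const_mul C
  refine hdom.mono' ((differentiable_f0v.continuous.mul hg.1.continuous).aestronglyMeasurable)
    (ae_of_all _ fun v => ?_)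
  have hf0 : 0 ≤ f0v v := (Real.exp_pos _).le
  calc ‖f0v v * g v‖ = f0v v * |g v| := by rw [Real.norm_eq_abs, abs_mul, abs_of_nonneg hf0]
    _ ≤ f0v v * (C * ∏ i, (1 + |v i|) ^ p) := by
        gcongr
        refine (hC v).trans (mul_le_mul_of_nonneg_left ?_ hC0)
        rw [Finset.prod_pow]
        exact pow_le_pow_left₀ (by positivity) (one_add_norm_le_prod v) p
    _ = C * ∏ i, ((1 + |v i|) ^ p * Real.exp (-v i ^ 2 / 2)) := by
        rw [f0v_eq_prod, Finset.prod_mul_distrib]; ring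

lemma integrable_mul_f0v_mul {w h : (Fin d → ℝ) → ℝ} (hw : w.HasTemperateGrowth)
    (hh : h.HasTemperateGrowth) : Integrable fun v => w v * (f0v v * h v) := by
  simpa only [mul_left_comm] using integrable_f0v_mul (hw.fun_mul hh)

@[fun_prop]
lemma hasTemperateGrowth_apply (s : Fin d) : HasTemperateGrowth fun v : Fin d → ℝ => v s :=
  (ContinuousLinearMap.proj (R := ℝ) (φ := fun _ : Fin d => ℝ) s).hasTemperateGrowth

lemma Function.HasTemperateGrowth.pd {g : (Fin d → ℝ) → ℝ} (hg : g.HasTemperateGrowth)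
    (t : Fin d) : HasTemperateGrowth fun v => pd t g v := by
  have hfd : (fderiv ℝ g).HasTemperateGrowth := by
    refine ⟨hg.1.fderiv_right le_rfl, fun n => ?_⟩
    obtain ⟨k, C, h⟩ := hg.2 (n + 1)
    exact ⟨k, C, fun x => by rw [norm_iteratedFDeriv_fderiv]; exact h x⟩
  exact (ContinuousLinearMap.apply ℝ ℝ (Pi.single t 1)).hasTemperateGrowth.comp hfd

lemma PolyAll.hasTemperateGrowth {g : (Fin d → ℝ) → ℝ}
    (hsm : ContDiff ℝ (⊤ : ℕ∞) g) (hg : PolyAll g) : g.HasTemperateGrowth :=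
  ⟨hsm, fun n => let ⟨C, p, h⟩ := hg n; ⟨p, C, h⟩⟩

lemma integrable_mul_pd_f0v_mul {w h : (Fin d → ℝ) → ℝ} (hw : w.HasTemperateGrowth)
    (hh : h.HasTemperateGrowth) (t : Fin d) :
    Integrable fun v => w v * pd t (fun u => f0v u * h u) v := by
  simp_rw [pd_f0v_mul (hh.1.differentiable (by simp)) t]
  have hpd := hh.pd t
  exact integrable_mul_f0v_mul hw (by fun_prop)

lemma integral_coord_mul_pd_f0v_mul {h : (Fin d → ℝ) → ℝ} (hh : h.HasTemperateGrowth)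
    (s t : Fin d) :
    ∫ v, v s * pd t (fun u => f0v u * h u) v = -(if s = t then ∫ v, f0v v * h v else 0) := by
  have hcoord (v : Fin d → ℝ) :
      fderiv ℝ (fun u : Fin d → ℝ => u s) v (Pi.single t 1) = if s = t then 1 else 0 := by
    rw [(hasFDerivAt_apply s v).fderiv]
    simp [Pi.single_apply]
  have hdiff : Differentiable ℝ fun u => f0v u * h u :=
    differentiable_f0v.mul (hh.1.differentiable (by simp))
  have hibp := integral_mul_fderiv_eq_neg_fderiv_mul_of_integrable (μ := volume)
    (f := fun u : Fin d → ℝ => u s) (g := fun u => f0v u * h u) (v := Pi.single t 1)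
    (by simpa only [hcoord] using (integrable_f0v_mul hh).const_mul _)
    (integrable_mul_pd_f0v_mul (hasTemperateGrowth_apply s) hh t)
    (integrable_mul_f0v_mul (hasTemperateGrowth_apply s) hh)
    (fun v _ => by fun_prop) (fun v _ => hdiff v)
  unfold pd
  rw [hibp]
  simp only [hcoord]
  split_ifs <;> simp

end Gaussian

section LowRank

variable {d : ℕ} {ι κ : Type*} [Fintype ι] [Fintype κ]

def lowRankDensity (X : ι → (Fin d → ℝ) → ℝ) (S : ι → κ → ℝ) (V : κ → (Fin d → ℝ) → ℝ)
    (x v : Fin d → ℝ) : ℝ :=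
  f0v v * ∑ i, ∑ j, X i x * S i j * V j v

def vlasovRHS (E : (Fin d → ℝ) → Fin d → ℝ) (f : (Fin d → ℝ) → (Fin d → ℝ) → ℝ)
    (x v : Fin d → ℝ) : ℝ :=
  -(∑ s, v s * pd s (fun y => f y v) x) + ∑ s, E x s * pd s (f x) v

lemma pd_sum_sum_mul (t : Fin d) {u : ι → (Fin d → ℝ) → ℝ} {x : Fin d → ℝ}
    (hu : ∀ i, DifferentiableAt ℝ (u i) x) (a : ι → κ → ℝ) (b : κ → ℝ) :
    pd t (fun y => ∑ i, ∑ j, u i y * a i j * b j) x = ∑ i, ∑ j, pd t (u i) x * a i j * b j := by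
  unfold pd
  simp (disch := fun_prop) only [fderiv_fun_sum, fderiv_mul_const, sum_apply, smul_apply,
    smul_eq_mul]
  exact Finset.sum_congr rfl fun i _ => Finset.sum_congr rfl fun j _ => by ring

lemma pd_lowRankDensity_left {X : ι → (Fin d → ℝ) → ℝ} {x : Fin d → ℝ}
    (hX : ∀ i, DifferentiableAt ℝ (X i) x) (S : ι → κ → ℝ) (V : κ → (Fin d → ℝ) → ℝ)
    (t : Fin d) (v : Fin d → ℝ) :
    pd t (fun y => lowRankDensity X S V y v) x = lowRankDensity (fun i => pd t (X i)) S V x v := by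
  unfold lowRankDensity
  rw [← pd_sum_sum_mul t hX S fun j => V j v]
  unfold pd
  rw [fderiv_const_mul (by fun_prop)]
  rfl

lemma integral_mul_lowRankDensity {w : (Fin d → ℝ) → ℝ} (hw : w.HasTemperateGrowth)
    {V : κ → (Fin d → ℝ) → ℝ} (hV : ∀ j, (V j).HasTemperateGrowth)
    (X : ι → (Fin d → ℝ) → ℝ) (S : ι → κ → ℝ) (x : Fin d → ℝ) :
    ∫ v, w v * lowRankDensity X S V x v = ∑ i, ∑ j, X i x * S i j * ipv w (V j) := by
  have hint (j : κ) : Integrable fun v => f0v v * w v * V j v := by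
    simpa only [mul_assoc] using integrable_f0v_mul (hw.fun_mul (hV j))
  have hexpand : (fun v => w v * lowRankDensity X S V x v)
      = fun v => ∑ i, ∑ j, X i x * S i j * (f0v v * w v * V j v) := by
    funext v
    simp only [lowRankDensity, Finset.mul_sum]
    exact Finset.sum_congr rfl fun i _ => Finset.sum_congr rfl fun j _ => by ring
  rw [hexpand, integral_finsetSum _ fun i _ => integrable_finsetSum _ fun j _ =>
    (hint j).const_mul _]
  refine Finset.sum_congr rfl fun i _ => ?_
  rw [integral_finsetSum _ fun j _ => (hint j).const_mul _]
  simp only [integral_const_mul, ipv]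

lemma pd_integral_mul_lowRankDensity {w : (Fin d → ℝ) → ℝ} (hw : w.HasTemperateGrowth)
    {V : κ → (Fin d → ℝ) → ℝ} (hV : ∀ j, (V j).HasTemperateGrowth)
    {X : ι → (Fin d → ℝ) → ℝ} {x : Fin d → ℝ} (hX : ∀ i, DifferentiableAt ℝ (X i) x)
    (S : ι → κ → ℝ) (t : Fin d) :
    pd t (fun y => ∫ v, w v * lowRankDensity X S V y v) x
      = ∫ v, w v * pd t (fun y => lowRankDensity X S V y v) x := by
  simp_rw [pd_lowRankDensity_left hX, integral_mul_lowRankDensity hw hV]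
  exact pd_sum_sum_mul t hX S _

theorem integral_coord_mul_vlasovRHS_lowRankDensity {X : ι → (Fin d → ℝ) → ℝ}
    (hX : ∀ i, Differentiable ℝ (X i)) {V : κ → (Fin d → ℝ) → ℝ}
    (hV : ∀ j, (V j).HasTemperateGrowth) (S : ι → κ → ℝ) (E : (Fin d → ℝ) → Fin d → ℝ)
    (x : Fin d → ℝ) (s : Fin d) :
    ∫ v, v s * vlasovRHS E (lowRankDensity X S V) x v
      = -(∑ t, pd t (fun y => ∫ v, v t * v s * lowRankDensity X S V y v) x)
        - E x s * ∫ v, lowRankDensity X S V x v := by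
  set f := lowRankDensity X S V
  have hXx (i : ι) : DifferentiableAt ℝ (X i) x := hX i x
  have hh : HasTemperateGrowth fun u => ∑ i, ∑ j, X i x * S i j * V j u := by fun_prop
  have hint_transport (t : Fin d) :
      Integrable fun v => v s * (v t * pd t (fun y => f y v) x) := by
    simp_rw [f, pd_lowRankDensity_left hXx, lowRankDensity]
    simpa only [mul_assoc] using integrable_mul_f0v_mul (w := fun v => v s * v t)
      (h := fun v => ∑ i, ∑ j, pd t (X i) x * S i j * V j v) (by fun_prop) (by fun_prop)
  have hint_force (t : Fin d) : Integrable fun v => v s * pd t (f x) v :=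
    integrable_mul_pd_f0v_mul (hasTemperateGrowth_apply s) hh t
  have htransport (t : Fin d) : ∫ v, v s * (v t * pd t (fun y => f y v) x)
      = pd t (fun y => ∫ v, v t * v s * f y v) x := by
    rw [pd_integral_mul_lowRankDensity (by fun_prop) hV hXx]
    exact integral_congr_ae (ae_of_all _ fun v => by ring)
  have hforce (t : Fin d) :
      ∫ v, v s * pd t (f x) v = -(if s = t then ∫ v, f x v else 0) :=
    integral_coord_mul_pd_f0v_mul hh s t
  have hsplit (v : Fin d → ℝ) : v s * vlasovRHS E f x v
      = -(∑ t, v s * (v t * pd t (fun y => f y v) x)) + ∑ t, E x t * (v s * pd t (f x) v) := by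
    rw [vlasovRHS, mul_add, mul_neg, Finset.mul_sum, Finset.mul_sum]
    exact congrArg _ (Finset.sum_congr rfl fun t _ => by ring)
  calc ∫ v, v s * vlasovRHS E f x v
      = -(∑ t, ∫ v, v s * (v t * pd t (fun y => f y v) x))
          + ∑ t, E x t * ∫ v, v s * pd t (f x) v := by
        simp_rw [hsplit]
        rw [integral_add (integrable_finsetSum _ fun t _ => hint_transport t).fun_neg
          (integrable_finsetSum _ fun t _ => (hint_force t).const_mul _), integral_neg,
          integral_finsetSum _ fun t _ => hint_transport t,
          integral_finsetSum _ fun t _ => (hint_force t).const_mul _]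
        simp only [integral_const_mul]
    _ = _ := by
        simp_rw [htransport, hforce, mul_neg, mul_ite, mul_zero, Finset.sum_neg_distrib,
          Finset.sum_ite_eq, Finset.mem_univ, if_true]
        ring

lemma ne_zero_of_ipv_div_self_eq_one {g : (Fin d → ℝ) → ℝ} {ν : ℝ}
    (h : ipv (fun v => g v / ν) (fun v => g v / ν) = 1) : ν ≠ 0 := by
  rintro rfl
  simp [ipv] at h

lemma integral_coord_mul_lowRankDensity [DecidableEq κ] {V : κ → (Fin d → ℝ) → ℝ}
    (hV : ∀ j, (V j).HasTemperateGrowth) (hon : ∀ i j, ipv (V i) (V j) = if i = j then 1 else 0)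
    {s : Fin d} {e : κ} {ν : ℝ} (hVe : V e = fun v => v s / ν) (hν : ν ≠ 0)
    (X : ι → (Fin d → ℝ) → ℝ) (S : ι → κ → ℝ) (x : Fin d → ℝ) :
    ∫ v, v s * lowRankDensity X S V x v = ν * ∑ i, X i x * S i e := by
  have hcoord (j : κ) : ipv (fun v => v s) (V j) = ν * if e = j then 1 else 0 := by
    rw [← hon e j, hVe]
    simp only [ipv, ← integral_const_mul]
    exact integral_congr_ae (ae_of_all _ fun v => by field_simp)
  simp_rw [integral_mul_lowRankDensity (hasTemperateGrowth_apply s) hV, hcoord, mul_ite,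
    mul_one, mul_zero, Finset.sum_ite_eq, Finset.mem_univ, if_true, Finset.mul_sum]
  exact Finset.sum_congr rfl fun i _ => by ring

end LowRank

section Galerkin

variable {d : ℕ} {ι : Type*} [Fintype ι]

lemma Continuous.integrableOn_cube {u : (Fin d → ℝ) → ℝ} (hu : Continuous u) :
    IntegrableOn u (cube d) := by
  have hsub : cube d ⊆ Set.Icc 0 1 := by
    rw [← Set.pi_univ_Icc]
    exact Set.pi_mono fun _ _ => Set.Ioc_subset_Icc_self
  exact (hu.continuousOn.integrableOn_compact isCompact_Icc).mono_set hsub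

lemma ipx_sum_mul {u : (Fin d → ℝ) → ℝ} (hu : Continuous u) {X : ι → (Fin d → ℝ) → ℝ}
    (hX : ∀ i, Continuous (X i)) (c : ι → ℝ) :
    ipx u (fun x => ∑ i, X i x * c i) = ∑ i, ipx u (X i) * c i := by
  unfold ipx
  simp_rw [Finset.mul_sum, ← mul_assoc]
  rw [integral_finsetSum]
  · simp only [integral_mul_const]
  · exact fun i _ => ((hu.mul (hX i)).mul continuous_const).integrableOn_cube

lemma continuous_of_mem_span_range {α : Type*} [TopologicalSpace α] {u : ι → α → ℝ}
    (hu : ∀ k, Continuous (u k)) {g : α → ℝ} (hg : g ∈ Submodule.span ℝ (Set.range u)) :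
    Continuous g := by
  obtain ⟨c, rfl⟩ := (Submodule.mem_span_range_iff_exists_fun ℝ).1 hg
  simp_rw [Finset.sum_fn]
  fun_prop

lemma sum_mul_ipx_eq_of_mem_span [DecidableEq ι] {u : ι → (Fin d → ℝ) → ℝ}
    (hu : ∀ k, Continuous (u k)) (hon : ∀ k l, ipx (u k) (u l) = if k = l then 1 else 0)
    {g : (Fin d → ℝ) → ℝ} (hg : g ∈ Submodule.span ℝ (Set.range u)) (x : Fin d → ℝ) :
    ∑ k, u k x * ipx (u k) g = g x := by
  obtain ⟨c, rfl⟩ := (Submodule.mem_span_range_iff_exists_fun ℝ).1 hg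
  have hsum : (∑ l, c l • u l) = fun y => ∑ l, u l y * c l := by
    funext y; simp [mul_comm]
  simp [hsum, ipx_sum_mul (hu _) hu, hon, mul_comm]

lemma sum_mul_ipx_add_eq_of_mem_span [DecidableEq ι] {u : ι → (Fin d → ℝ) → ℝ}
    (hu : ∀ k, Continuous (u k)) (hon : ∀ k l, ipx (u k) (u l) = if k = l then 1 else 0)
    {K G : (Fin d → ℝ) → ℝ} (hK : Continuous K) {τ : ℝ} (hτ : τ ≠ 0)
    (hspan : (fun y => K y + τ * G y) ∈ Submodule.span ℝ (Set.range u)) (x : Fin d → ℝ) :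
    ∑ k, u k x * (ipx (u k) K + τ * ∫ y in cube d, u k y * G y) = K x + τ * G x := by
  have hG : Continuous G := by
    refine (((continuous_of_mem_span_range hu hspan).sub hK).div_const τ).congr fun y => ?_
    simp only [Pi.sub_apply, add_sub_cancel_left]
    field_simp
  have hipx (k : ι) : ipx (u k) K + τ * ∫ y in cube d, u k y * G y
      = ipx (u k) fun y => K y + τ * G y := by
    unfold ipx
    rw [← integral_const_mul, ← integral_add (f := fun y => u k y * K y)
      (g := fun y => τ * (u k y * G y)) ((hu k).mul hK).integrableOn_cube
      (continuous_const.mul ((hu k).mul hG)).integrableOn_cube]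
    exact integral_congr_ae (ae_of_all _ fun y => by ring)
  simp_rw [hipx]
  exact sum_mul_ipx_eq_of_mem_span hu hon hspan x

lemma sum_mul_sstep_eq_kstep [DecidableEq ι] {κ : Type*} [Fintype κ] [DecidableEq κ]
    {u : ι → (Fin d → ℝ) → ℝ} (hu : ∀ k, Continuous (u k))
    (hon : ∀ k l, ipx (u k) (u l) = if k = l then 1 else 0)
    {X : κ → (Fin d → ℝ) → ℝ} (hX : ∀ i, Continuous (X i)) (S : κ → κ → ℝ)
    {V : κ → (Fin d → ℝ) → ℝ} {e : κ} (hV : ∀ j, ipv (V j) (V e) = if j = e then 1 else 0)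
    {τ : ℝ} (hτ : τ ≠ 0) (F : (Fin d → ℝ) → (Fin d → ℝ) → ℝ)
    (hspan : (fun y => ∑ i, X i y * S i e + τ * ∫ v, V e v * F y v)
      ∈ Submodule.span ℝ (Set.range u)) (x : Fin d → ℝ) :
    ∑ k, u k x * ((∑ i, ∑ j, ipx (u k) (X i) * S i j * ipv (V j) (V e))
        + τ * ∫ y in cube d, ∫ v, u k y * V e v * F y v)
      = ∑ i, X i x * S i e + τ * ∫ v, V e v * F x v := by
  have hcoeff (k : ι) : (∑ i, ∑ j, ipx (u k) (X i) * S i j * ipv (V j) (V e))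
      + τ * ∫ y in cube d, ∫ v, u k y * V e v * F y v
      = ipx (u k) (fun y => ∑ i, X i y * S i e)
        + τ * ∫ y in cube d, u k y * ∫ v, V e v * F y v := by
    simp_rw [hV, mul_ite, mul_one, mul_zero, Finset.sum_ite_eq', Finset.mem_univ, if_true,
      mul_assoc (u k _), integral_const_mul, ipx_sum_mul (hu k) hX]
  simp_rw [hcoeff]
  exact sum_mul_ipx_add_eq_of_mem_span hu hon (by fun_prop) hτ hspan x

end Galerkin

/-- with `V_1 = Ṽ_1 = 1/‖1‖` and `V_{1+s} = Ṽ_{1+s} = v_s/‖v_s‖`, the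
discrete momentum continuity equation
`(j^{n+1} − j^n)/τ + ∇_x · σ^n + E^n ρ^n = 0` holds pointwise, componentwise. -/
theorem discrete_momentum_continuity
    (d r R R' : ℕ) (hr : d + 1 ≤ r) (hR' : d + 1 ≤ R')
    (τ : ℝ) (hτ : 0 < τ)
    (S : Fin r → Fin r → ℝ)
    (E : (Fin d → ℝ) → Fin d → ℝ)
    (X : Fin r → (Fin d → ℝ) → ℝ)
    (hXsm : ∀ i, ContDiff ℝ (⊤ : ℕ∞) (X i))
    (V : Fin r → (Fin d → ℝ) → ℝ)
    (hVsm : ∀ j, ContDiff ℝ (⊤ : ℕ∞) (V j)) (hVpoly : ∀ j, PolyAll (V j))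
    (hVon : ∀ i j, ipv (V i) (V j) = if i = j then (1 : ℝ) else 0)
    (Xt : Fin R → (Fin d → ℝ) → ℝ)
    (hXtsm : ∀ k, ContDiff ℝ (⊤ : ℕ∞) (Xt k))
    (hXton : ∀ k l, ipx (Xt k) (Xt l) = if k = l then (1 : ℝ) else 0)
    (Vt : Fin R' → (Fin d → ℝ) → ℝ)
    -- the low-rank function f^n and the right-hand side RHS[f^n]
    (fn : (Fin d → ℝ) → (Fin d → ℝ) → ℝ)
    (hfn : fn = fun x v => f0v v * ∑ i, ∑ j, X i x * S i j * V j v)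
    (RHS : (Fin d → ℝ) → (Fin d → ℝ) → ℝ)
    (hRHS : RHS = fun x v =>
      -(∑ s, v s * pd s (fun y => fn y v) x) + ∑ s, E x s * pd s (fn x) v)
    -- the K step: K^{n+1}_k = K^n_k + τ ∫ V_k RHS[f^n] dv
    (K1 : Fin r → (Fin d → ℝ) → ℝ)
    (hK1 : K1 = fun k x => (∑ i, X i x * S i k) + τ * ∫ v, V k v * RHS x v)
    -- the augmented bases contain X_i, ∂_t X_i, K_i^{n+1} and V_j respectively
    (hspanK : ∀ i, K1 i ∈ Submodule.span ℝ (Set.range Xt))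
    -- the projection matrices M, N^T and the updated coefficients S̃^{n+1}
    (M : Fin R → Fin r → ℝ) (hM : M = fun k i => ipx (Xt k) (X i))
    (NT : Fin r → Fin R' → ℝ) (hNT : NT = fun j l => ipv (V j) (Vt l))
    (St : Fin R → Fin R' → ℝ)
    (hSt : St = fun k l => (∑ i, ∑ j, M k i * S i j * NT j l)
      + τ * ∫ x in cube d, ∫ v, Xt k x * Vt l v * RHS x v)
    -- fixed velocity basis functions: 1/‖1‖ and v_s/‖v_s‖, in both V and Ṽ^{n+1}
    (hVs : ∀ s : Fin d, V ⟨s.1 + 1, by have := s.isLt; omega⟩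
      = fun v => v s / nv fun v : Fin d → ℝ => v s)
    (hVts : ∀ s : Fin d, Vt ⟨s.1 + 1, by have := s.isLt; omega⟩
      = fun v => v s / nv fun v : Fin d → ℝ => v s)
    -- the moments ρ^n, j^n, σ^n and the updated momentum density j^{n+1}
    (ρ : (Fin d → ℝ) → ℝ) (jn jn' : (Fin d → ℝ) → Fin d → ℝ)
    (σn : (Fin d → ℝ) → Fin d → Fin d → ℝ)
    (hρ : ρ = fun x => ∫ v, fn x v)
    (hjn : jn = fun x s => ∫ v, v s * fn x v)
    (hσn : σn = fun x t s => ∫ v, v t * v s * fn x v)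
    (hjn' : jn' = fun x (s : Fin d) => (nv fun v : Fin d → ℝ => v s) *
      ∑ k, Xt k x * St k ⟨s.1 + 1, by have := s.isLt; omega⟩) :
    ∀ x, ∀ s : Fin d,
      (jn' x s - jn x s) / τ + (∑ t, pd t (fun y => σn y t s) x) + E x s * ρ x = 0 := by
  intro x s
  have hfn' : fn = lowRankDensity X S V := hfn
  have hRHS' : RHS = vlasovRHS E fn := hRHS
  subst hfn' hRHS' hK1 hM hNT hSt hρ hjn hσn hjn'
  beta_reduce
  set ν := nv fun v : Fin d → ℝ => v s
  set e : Fin r := ⟨s.1 + 1, by omega⟩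
  have hV j : (V j).HasTemperateGrowth := (hVpoly j).hasTemperateGrowth (hVsm j)
  have hVe : V e = fun v => v s / ν := hVs s
  -- `ν ≠ 0` is forced by normalisation: `V e = v s / 0` would be the zero function.
  have hν : ν ≠ 0 := ne_zero_of_ipv_div_self_eq_one (hVe ▸ (hVon e e).trans (if_pos rfl))
  have hVte : Vt ⟨s.1 + 1, by omega⟩ = V e := (hVts s).trans (hVs s).symm
  have hG : ∫ v, V e v * vlasovRHS E (lowRankDensity X S V) x v
      = ν⁻¹ * ∫ v, v s * vlasovRHS E (lowRankDensity X S V) x v := by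
    simp only [hVe, ← integral_const_mul]
    exact integral_congr_ae (ae_of_all _ fun v => by field_simp)
  rw [hVte, sum_mul_sstep_eq_kstep (fun k => (hXtsm k).continuous) hXton
      (fun i => (hXsm i).continuous) S (fun j => hVon j e) hτ.ne' _ (hspanK e) x,
    integral_coord_mul_lowRankDensity hV hVon hVe hν X S x, hG,
    integral_coord_mul_vlasovRHS_lowRankDensity (fun i => (hXsm i).differentiable (by simp)) hV]
  field_simp
  ring
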